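/- arXiv:1801.04021 — 2 statements merged into one kernel-verified Lean document; each statement's English description precedes it below -/
import Mathlib

section
/- Let ν ∈ (0, π/16) and let m ≥ 4 be a real number. Let v ∈ ℂ and t ≥ 0, and set w = v + t·exp(−iν). Then C_m(w) ⊆ C_m(v) and dist(C_m(w), ℂ ∖ C_m(v)) ≥ t · sin(ν/m). -/
open Real

/-- The closed cone `C_m(w) = { w + x e^{-iα} : x ≥ 0, |α - ν| ≤ ν/m }` with vertex `w`. -/
def cone (ν m : ℝ) (w : ℂ) : Set ℂ :=
  {z : ℂ | ∃ x : ℝ, 0 ≤ x ∧ ∃ α : ℝ, |α - ν| ≤ ν / m ∧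
    z = w + (x : ℂ) * Complex.exp (-(α : ℂ) * Complex.I)}

/-- The distance `dist(S, T) = inf {|p - q| : p ∈ S, q ∈ T}` between two subsets of `ℂ`. -/
noncomputable def setDist (S T : Set ℂ) : ℝ :=
  sInf (Set.image2 dist S T)

/-!
Rotating about `v` by `e^{iν}` maps `C_m(v)` onto the sector `{x e^{iβ} : x ≥ 0, |β| ≤ δ}`,
`δ = ν/m`, and `C_m(w)` onto its translate by the real number `t`. Since `δ ≤ π/2`, the sector is
the intersection of the half-planes `Im(u e^{iδ}) ≥ 0` and `Im(u e^{-iδ}) ≤ 0`. Translating by `t`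
raises the first functional and lowers the second by `t sin δ ≥ 0`, and both functionals are
1-Lipschitz; this gives the inclusion and the distance bound at once.
-/

open Complex

def sector (δ : ℝ) : Set ℂ :=
  {u : ℂ | ∃ x : ℝ, 0 ≤ x ∧ ∃ β : ℝ, |β| ≤ δ ∧ u = x * exp (β * I)}

lemma le_setDist_of_forall_le_dist {S T : Set ℂ} {c : ℝ} (hS : S.Nonempty) (hT : T.Nonempty)
    (h : ∀ p ∈ S, ∀ q ∈ T, c ≤ dist p q) : c ≤ setDist S T :=
  le_csInf (hS.image2 hT) (by rintro _ ⟨p, hp, q, hq, rfl⟩; exact h p hp q hq)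

lemma ofReal_mul_exp_mul_exp (x β θ : ℝ) :
    (x : ℂ) * exp (β * I) * exp (θ * I) = x * exp (↑(β + θ) * I) := by
  rw [mul_assoc, ← Complex.exp_add]; push_cast; ring_nf

lemma im_ofReal_mul_exp_mul_I (x θ : ℝ) : ((x : ℂ) * exp (θ * I)).im = x * Real.sin θ := by
  rw [im_ofReal_mul, exp_ofReal_mul_I_im]

lemma im_add_ofReal_mul_exp_mul_I (u : ℂ) (t θ : ℝ) :
    ((u + t) * exp (θ * I)).im = (u * exp (θ * I)).im + t * Real.sin θ := by
  rw [add_mul, add_im, im_ofReal_mul_exp_mul_I]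

lemma exp_neg_I_mul_mul_exp (θ : ℝ) : exp (-I * θ) * exp (θ * I) = 1 := by
  rw [← Complex.exp_add, ← Complex.exp_zero]; ring_nf

lemma abs_im_mul_exp_mul_I_le_norm (z : ℂ) (θ : ℝ) : |(z * exp (θ * I)).im| ≤ ‖z‖ := by
  simpa [norm_mul, norm_exp_ofReal_mul_I] using abs_im_le_norm (z * exp (θ * I))

lemma dist_sub_mul_exp_mul_I (v p q : ℂ) (θ : ℝ) :
    dist ((p - v) * exp (θ * I)) ((q - v) * exp (θ * I)) = dist p q := by
  rw [dist_eq_norm, dist_eq_norm, ← sub_mul, norm_mul, norm_exp_ofReal_mul_I, mul_one,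
    sub_sub_sub_cancel_right]

lemma abs_le_of_sin_add_nonneg_of_sin_sub_nonpos {φ δ : ℝ} (hδ : 0 < δ) (hφ₀ : -π < φ)
    (hφ₁ : φ ≤ π) (h₁ : 0 ≤ Real.sin (φ + δ)) (h₂ : Real.sin (φ - δ) ≤ 0) : |φ| ≤ δ := by
  rw [abs_le]
  constructor
  · by_contra! hlt
    linarith [Real.sin_neg_of_neg_of_neg_pi_lt (x := φ + δ) (by linarith) (by linarith)]
  · by_contra! hgt
    linarith [Real.sin_pos_of_pos_of_lt_pi (x := φ - δ) (by linarith) (by linarith)]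

section sector

variable {δ : ℝ}

lemma zero_mem_sector (hδ : 0 ≤ δ) : (0 : ℂ) ∈ sector δ :=
  ⟨0, le_rfl, 0, by simpa using hδ, by simp⟩

lemma mem_sector_iff (hδ₀ : 0 < δ) (hδ : δ ≤ π / 2) {u : ℂ} :
    u ∈ sector δ ↔ 0 ≤ (u * exp (δ * I)).im ∧ (u * exp (↑(-δ) * I)).im ≤ 0 := by
  constructor
  · rintro ⟨x, hx, β, hβ, rfl⟩
    rw [abs_le] at hβ
    rw [ofReal_mul_exp_mul_exp, ofReal_mul_exp_mul_exp, im_ofReal_mul_exp_mul_I,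
      im_ofReal_mul_exp_mul_I]
    exact ⟨mul_nonneg hx (Real.sin_nonneg_of_nonneg_of_le_pi (by linarith) (by linarith)),
      mul_nonpos_of_nonneg_of_nonpos hx
        (Real.sin_nonpos_of_nonpos_of_neg_pi_le (by linarith) (by linarith))⟩
  · rintro ⟨h₁, h₂⟩
    rcases eq_or_ne u 0 with rfl | hu
    · exact zero_mem_sector hδ₀.le
    have hpolar := norm_mul_exp_arg_mul_I u
    have hr : 0 < ‖u‖ := norm_pos_iff.mpr hu
    rw [← hpolar, ofReal_mul_exp_mul_exp, im_ofReal_mul_exp_mul_I] at h₁ h₂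
    refine ⟨‖u‖, hr.le, u.arg, ?_, hpolar.symm⟩
    exact abs_le_of_sin_add_nonneg_of_sin_sub_nonpos hδ₀ (neg_pi_lt_arg u) (arg_le_pi u)
      (nonneg_of_mul_nonneg_right h₁ hr) (nonpos_of_mul_nonpos_right h₂ hr)

lemma neg_one_notMem_sector (hδ₀ : 0 < δ) (hδ : δ ≤ π / 2) : (-1 : ℂ) ∉ sector δ := by
  rw [mem_sector_iff hδ₀ hδ, neg_one_mul, neg_im, exp_ofReal_mul_I_im]
  have hsin := Real.sin_pos_of_pos_of_lt_pi hδ₀ (by linarith [pi_pos])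
  exact fun h => hsin.not_ge (by linarith [h.1])

lemma add_ofReal_mem_sector (hδ₀ : 0 < δ) (hδ : δ ≤ π / 2) {u : ℂ} (hu : u ∈ sector δ)
    {t : ℝ} (ht : 0 ≤ t) : u + t ∈ sector δ := by
  have hsin : 0 ≤ t * Real.sin δ :=
    mul_nonneg ht (Real.sin_nonneg_of_nonneg_of_le_pi hδ₀.le (by linarith [pi_pos]))
  rw [mem_sector_iff hδ₀ hδ] at hu ⊢
  rw [im_add_ofReal_mul_exp_mul_I, im_add_ofReal_mul_exp_mul_I, Real.sin_neg]
  constructor <;> linarith [hu.1, hu.2]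

lemma mul_sin_le_dist_add_ofReal (hδ₀ : 0 < δ) (hδ : δ ≤ π / 2) {u q : ℂ}
    (hu : u ∈ sector δ) (hq : q ∉ sector δ) (t : ℝ) : t * Real.sin δ ≤ dist (u + t) q := by
  rw [mem_sector_iff hδ₀ hδ] at hu hq
  rw [dist_eq_norm]
  by_cases h₁ : 0 ≤ (q * exp (δ * I)).im
  · have h₂ : 0 < (q * exp (↑(-δ) * I)).im := lt_of_not_ge fun h => hq ⟨h₁, h⟩
    have hle := abs_im_mul_exp_mul_I_le_norm (u + t - q) (-δ)
    rw [sub_mul, sub_im, im_add_ofReal_mul_exp_mul_I, Real.sin_neg, abs_le] at hle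
    linarith [hu.2, hle.1]
  · have hle := abs_im_mul_exp_mul_I_le_norm (u + t - q) δ
    rw [sub_mul, sub_im, im_add_ofReal_mul_exp_mul_I, abs_le] at hle
    linarith [hu.1, hle.2]

end sector

lemma mem_cone_iff_mem_sector (ν m : ℝ) (v z : ℂ) :
    z ∈ cone ν m v ↔ (z - v) * exp (ν * I) ∈ sector (ν / m) := by
  constructor
  · rintro ⟨x, hx, α, hα, rfl⟩
    refine ⟨x, hx, ν - α, by rwa [abs_sub_comm], ?_⟩
    rw [add_sub_cancel_left, mul_assoc, ← Complex.exp_add]; push_cast; ring_nf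
  · rintro ⟨x, hx, β, hβ, hz⟩
    refine ⟨x, hx, ν - β, by rwa [sub_sub_cancel_left, abs_neg], ?_⟩
    calc z = v + (z - v) * exp (ν * I) * exp (-I * ν) := by
          rw [mul_assoc, mul_comm (Complex.exp _), exp_neg_I_mul_mul_exp, mul_one,
            add_sub_cancel]
      _ = v + x * exp (-↑(ν - β) * I) := by
          rw [hz, mul_assoc, ← Complex.exp_add]; push_cast; ring_nf

lemma sub_mul_exp_eq_add_ofReal {v w : ℂ} {t ν : ℝ}
    (hw : w = v + (t : ℂ) * exp (-I * (ν : ℂ))) (z : ℂ) :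
    (z - v) * exp (ν * I) = (z - w) * exp (ν * I) + t := by
  rw [hw]
  linear_combination (t : ℂ) * exp_neg_I_mul_mul_exp ν

/-- For `ν ∈ (0, π/16)`, `m ≥ 4`, `v ∈ ℂ`, `t ≥ 0` and
`w = v + t e^{-iν}`: `C_m(w) ⊆ C_m(v)` and `dist(C_m(w), ℂ ∖ C_m(v)) ≥ t sin(ν/m)`. -/
theorem cone_axis_shift_subset_and_dist
    (ν m : ℝ) (hν : ν ∈ Set.Ioo (0 : ℝ) (Real.pi / 16)) (hm : 4 ≤ m)
    (v : ℂ) (t : ℝ) (ht : 0 ≤ t)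
    (w : ℂ) (hw : w = v + (t : ℂ) * Complex.exp (-Complex.I * (ν : ℂ))) :
    cone ν m w ⊆ cone ν m v ∧
      t * Real.sin (ν / m) ≤ setDist (cone ν m w) (cone ν m v)ᶜ := by
  obtain ⟨hν₀, hν₁⟩ := hν
  have hm₀ : 0 < m := by linarith
  have hδ₀ : 0 < ν / m := div_pos hν₀ hm₀
  have hδ : ν / m ≤ π / 2 := by
    rw [div_le_iff₀ hm₀]; nlinarith [pi_pos]
  refine ⟨fun z hz => ?_, le_setDist_of_forall_le_dist ⟨w, ?_⟩ ⟨v - exp (-I * ν), ?_⟩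
    fun p hp q hq => ?_⟩
  · rw [mem_cone_iff_mem_sector] at hz ⊢
    rw [sub_mul_exp_eq_add_ofReal hw]
    exact add_ofReal_mem_sector hδ₀ hδ hz ht
  · rw [mem_cone_iff_mem_sector, sub_self, zero_mul]
    exact zero_mem_sector hδ₀.le
  · rw [Set.mem_compl_iff, mem_cone_iff_mem_sector, sub_sub_cancel_left, neg_mul,
      exp_neg_I_mul_mul_exp]
    exact neg_one_notMem_sector hδ₀ hδ
  · rw [mem_cone_iff_mem_sector] at hp
    rw [Set.mem_compl_iff, mem_cone_iff_mem_sector] at hq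
    rw [← dist_sub_mul_exp_mul_I v p q ν, sub_mul_exp_eq_add_ofReal hw]
    exact mul_sin_le_dist_add_ofReal hδ₀ hδ hp hq t
end

section
/- Let ν ∈ (0, π/16), let m ≥ 4 be a real number, let θ ∈ ℂ with Im θ = ν and |Re θ| ≤ 10⁻³, and let v ∈ ℂ. Then: (a) for every z ∈ ℂ and every s ≥ 0, dist(z − e^{−θ}·s, C_m(v)) ≥ dist(z, C_m(v)); and (b) for every z ∈ ℂ with z ∉ C_m(v) and every s ≥ 0, dist(z − e^{−θ}·s, C_m(v)) ≥ (1/2)·s·sin(ν/m). -/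
open Real

/-!
With `δ = ν/m`, the cone `C_m(v)` is the intersection of the two closed half-planes bounded by
the lines through `v` at angles `δ` on either side of its axis `e^{-iν}`, and for `Im θ = ν`
the shift `e^{-θ} s` is the axis vector `r e^{-iν}` with `r = e^{-Re θ} s ≥ s/2`.
(a) The cone is stable under adding `r e^{-iν}`, and `|z - (p + r e^{-iν})| = |(z - r e^{-iν}) - p|`.
(b) A point outside the cone lies strictly outside one of the two half-planes, and subtracting
`r e^{-iν}` moves it a further `r sin δ` away from that boundary line; the distance to the cone
dominates the distance to that half-plane.
-/

theorem infDist_le_infDist_sub_of_add_mem {E : Type*} [SeminormedAddCommGroup E] {S : Set E}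
    {u : E} (hS : ∀ p ∈ S, p + u ∈ S) (z : E) :
    Metric.infDist z S ≤ Metric.infDist (z - u) S := by
  rcases S.eq_empty_or_nonempty with rfl | hne
  · simp
  refine (Metric.le_infDist hne).2 fun p hp => ?_
  rw [dist_sub_eq_dist_add_left]
  exact Metric.infDist_le_dist_of_mem (hS p hp)

/-- `imRot β w` is the signed distance from `w` to the line `ℝ e^{-iβ}`. -/
noncomputable def imRot (β : ℝ) (w : ℂ) : ℝ := (w * Complex.exp (β * Complex.I)).im

theorem imRot_add (β : ℝ) (w₁ w₂ : ℂ) : imRot β (w₁ + w₂) = imRot β w₁ + imRot β w₂ := by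
  simp [imRot, add_mul]

theorem imRot_sub (β : ℝ) (w₁ w₂ : ℂ) : imRot β (w₁ - w₂) = imRot β w₁ - imRot β w₂ := by
  simp [imRot, sub_mul]

theorem imRot_eq (β : ℝ) (w : ℂ) : imRot β w = w.re * Real.sin β + w.im * Real.cos β := by
  simp [imRot, Complex.exp_mul_I, Complex.cos_ofReal_re, Complex.sin_ofReal_re]

theorem imRot_add_angle (β d : ℝ) (w : ℂ) :
    imRot (β + d) w = imRot d (w * Complex.exp (β * Complex.I)) := by
  simp only [imRot, Complex.ofReal_add, add_mul, Complex.exp_add, mul_assoc]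

theorem imRot_ofReal_mul_exp (β x α : ℝ) :
    imRot β (x * Complex.exp (-α * Complex.I)) = x * Real.sin (β - α) := by
  have : -(α : ℂ) * Complex.I = ((-α : ℝ) : ℂ) * Complex.I := by push_cast; ring
  rw [this, imRot_eq, Complex.exp_mul_I, ← Complex.ofReal_cos, ← Complex.ofReal_sin,
    Real.sin_sub, Real.cos_neg, Real.sin_neg]
  simp only [Complex.mul_re, Complex.mul_im, Complex.add_re, Complex.add_im, Complex.ofReal_re,
    Complex.ofReal_im, Complex.I_re, Complex.I_im]
  ring

theorem abs_imRot_le_dist (β : ℝ) (z p : ℂ) : |imRot β (z - p)| ≤ dist z p :=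
  calc |imRot β (z - p)| ≤ ‖(z - p) * Complex.exp (β * Complex.I)‖ := Complex.abs_im_le_norm _
    _ = dist z p := by rw [norm_mul, Complex.norm_exp_ofReal_mul_I, mul_one, Complex.dist_eq]

theorem abs_arg_le_of_abs_im_mul_cos_le {δ : ℝ} (hδ0 : 0 < δ) (hδ : δ ≤ π / 2) {w : ℂ}
    (h : |w.im| * Real.cos δ ≤ w.re * Real.sin δ) : |Complex.arg w| ≤ δ := by
  have hsin : 0 < Real.sin δ := Real.sin_pos_of_pos_of_lt_pi hδ0 (by linarith [pi_pos])
  have hcos : 0 ≤ Real.cos δ := Real.cos_nonneg_of_mem_Icc ⟨by linarith, hδ⟩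
  have hre : 0 ≤ w.re := by
    by_contra! hre
    nlinarith [abs_nonneg w.im]
  have him : |w.im| ≤ ‖w‖ * Real.sin δ := by
    refine abs_le_of_sq_le_sq ?_ (by positivity)
    rw [mul_pow, Complex.sq_norm, Complex.normSq_apply]
    -- `(re² + im²) sin²δ ≥ im² cos²δ + im² sin²δ = im²`
    have := mul_self_le_mul_self (by positivity) h
    nlinarith [sin_sq_add_cos_sq δ, sq_abs w.im]
  have hratio : |w.im / ‖w‖| ≤ Real.sin δ := by
    rcases (norm_nonneg w).eq_or_lt with h0 | hpos
    · simp [← h0, hsin.le]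
    · rwa [abs_div, abs_norm, div_le_iff₀ hpos, mul_comm]
  rw [Complex.arg_of_re_nonneg hre, abs_le]
  obtain ⟨hlo, hhi⟩ := abs_le.1 hratio
  have hδ' : δ ∈ Set.Icc (-(π / 2)) (π / 2) := ⟨by linarith, hδ⟩
  have hbound : w.im / ‖w‖ ∈ Set.Icc (-1 : ℝ) 1 :=
    ⟨by linarith [Real.sin_le_one δ], by linarith [Real.sin_le_one δ]⟩
  constructor
  · rw [Real.le_arcsin_iff_sin_le ⟨by linarith, by linarith⟩ hbound, Real.sin_neg]
    exact hlo
  · exact (Real.arcsin_le_iff_le_sin hbound hδ').2 hhi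

section Cone

variable {ν m : ℝ}

theorem mem_cone_iff (hδ0 : 0 < ν / m) (hδ : ν / m ≤ π / 2) (v z : ℂ) :
    z ∈ cone ν m v ↔ 0 ≤ imRot (ν + ν / m) (z - v) ∧ imRot (ν - ν / m) (z - v) ≤ 0 := by
  constructor
  · rintro ⟨x, hx, α, hα, rfl⟩
    rw [add_sub_cancel_left, imRot_ofReal_mul_exp, imRot_ofReal_mul_exp]
    obtain ⟨hα₁, hα₂⟩ := abs_le.1 hα
    refine ⟨mul_nonneg hx (Real.sin_nonneg_of_nonneg_of_le_pi (by linarith) (by linarith)),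
      mul_nonpos_of_nonneg_of_nonpos hx ?_⟩
    rw [← neg_sub, Real.sin_neg, neg_nonpos]
    exact Real.sin_nonneg_of_nonneg_of_le_pi (by linarith) (by linarith)
  · rintro ⟨h₁, h₂⟩
    set w := (z - v) * Complex.exp (ν * Complex.I) with hw
    have hsector : |w.im| * Real.cos (ν / m) ≤ w.re * Real.sin (ν / m) := by
      rw [imRot_add_angle, imRot_eq] at h₁
      rw [sub_eq_add_neg ν, imRot_add_angle, imRot_eq, Real.sin_neg, Real.cos_neg] at h₂
      rcases abs_cases w.im with ⟨habs, _⟩ | ⟨habs, _⟩ <;> rw [habs] <;> linarith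
    refine ⟨‖w‖, norm_nonneg w, ν - Complex.arg w, ?_, ?_⟩
    · rw [sub_sub_cancel_left, abs_neg]
      exact abs_arg_le_of_abs_im_mul_cos_le hδ0 hδ hsector
    · have hexp : -((ν - Complex.arg w : ℝ) : ℂ) * Complex.I
          = Complex.arg w * Complex.I + -ν * Complex.I := by push_cast; ring
      rw [hexp, Complex.exp_add, ← mul_assoc, Complex.norm_mul_exp_arg_mul_I, hw, mul_assoc,
        ← Complex.exp_add]
      simp

theorem add_mem_cone (hδ0 : 0 < ν / m) (hδ : ν / m ≤ π / 2) {v p : ℂ} (hp : p ∈ cone ν m v)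
    {r : ℝ} (hr : 0 ≤ r) : p + r * Complex.exp (-ν * Complex.I) ∈ cone ν m v := by
  rw [mem_cone_iff hδ0 hδ] at hp ⊢
  rw [add_sub_right_comm, imRot_add, imRot_add, imRot_ofReal_mul_exp, imRot_ofReal_mul_exp,
    add_sub_cancel_left, show ν - ν / m - ν = -(ν / m) by ring, Real.sin_neg]
  have : 0 ≤ r * Real.sin (ν / m) :=
    mul_nonneg hr (Real.sin_nonneg_of_nonneg_of_le_pi hδ0.le (by linarith [pi_pos]))
  constructor <;> linarith [hp.1, hp.2]

theorem mul_sin_le_infDist_sub_of_notMem_cone (hδ0 : 0 < ν / m) (hδ : ν / m ≤ π / 2)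
    {v z : ℂ} (hz : z ∉ cone ν m v) (r : ℝ) :
    r * Real.sin (ν / m) ≤
      Metric.infDist (z - r * Complex.exp (-ν * Complex.I)) (cone ν m v) := by
  set u : ℂ := r * Complex.exp (-ν * Complex.I)
  have hu₁ : imRot (ν + ν / m) u = r * Real.sin (ν / m) := by
    rw [imRot_ofReal_mul_exp, add_sub_cancel_left]
  have hu₂ : imRot (ν - ν / m) u = -(r * Real.sin (ν / m)) := by
    rw [imRot_ofReal_mul_exp, show ν - ν / m - ν = -(ν / m) by ring, Real.sin_neg, mul_neg]
  have hne : (cone ν m v).Nonempty := ⟨v, 0, le_rfl, ν, by simpa using hδ0.le, by simp⟩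
  refine (Metric.le_infDist hne).2 fun p hp => ?_
  rw [mem_cone_iff hδ0 hδ] at hp hz
  have hsplit : ∀ β, imRot β (z - u - p) = imRot β (z - v) - imRot β (p - v) - imRot β u := by
    intro β
    rw [show z - u - p = (z - v) - (p - v) - u by ring, imRot_sub, imRot_sub]
  by_cases h₁ : 0 ≤ imRot (ν + ν / m) (z - v)
  · have h₂ : 0 < imRot (ν - ν / m) (z - v) := lt_of_not_ge fun h₂ => hz ⟨h₁, h₂⟩
    calc r * Real.sin (ν / m) ≤ imRot (ν - ν / m) (z - u - p) := by
          rw [hsplit, hu₂]; linarith [hp.2]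
      _ ≤ dist (z - u) p := (le_abs_self _).trans (abs_imRot_le_dist _ _ _)
  · calc r * Real.sin (ν / m) ≤ -imRot (ν + ν / m) (z - u - p) := by
          rw [hsplit, hu₁]; linarith [hp.1]
      _ ≤ dist (z - u) p := (neg_le_abs _).trans (abs_imRot_le_dist _ _ _)

end Cone

theorem exp_neg_mul_ofReal_of_im_eq {θ : ℂ} {ν : ℝ} (hθ : θ.im = ν) (s : ℝ) :
    Complex.exp (-θ) * s = (Real.exp (-θ.re) * s : ℝ) * Complex.exp (-ν * Complex.I) := by
  have : -θ = ((-θ.re : ℝ) : ℂ) + -ν * Complex.I := by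
    apply Complex.ext <;> simp [hθ]
  rw [this, Complex.exp_add, ← Complex.ofReal_exp]
  push_cast
  ring

/-- For `ν ∈ (0, π/16)`, `m ≥ 4`, `θ` with `Im θ = ν`, `|Re θ| ≤ 10⁻³`
and `v ∈ ℂ`: (a) for every `z` and `s ≥ 0`, `dist(z - e^{-θ} s, C_m(v)) ≥ dist(z, C_m(v))`;
(b) for every `z ∉ C_m(v)` and `s ≥ 0`, `dist(z - e^{-θ} s, C_m(v)) ≥ (1/2) s sin(ν/m)`. -/
theorem cone_dist_shift_lower_bounds
    (ν m : ℝ) (hν : ν ∈ Set.Ioo (0 : ℝ) (Real.pi / 16)) (hm : 4 ≤ m)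
    (θ : ℂ) (hθim : θ.im = ν) (hθre : |θ.re| ≤ 1 / 1000) (v : ℂ) :
    (∀ z : ℂ, ∀ s : ℝ, 0 ≤ s →
      Metric.infDist z (cone ν m v) ≤
        Metric.infDist (z - Complex.exp (-θ) * (s : ℂ)) (cone ν m v)) ∧
    (∀ z : ℂ, z ∉ cone ν m v → ∀ s : ℝ, 0 ≤ s →
      (1/2) * s * Real.sin (ν / m) ≤
        Metric.infDist (z - Complex.exp (-θ) * (s : ℂ)) (cone ν m v)) := by
  obtain ⟨hν0, hνπ⟩ := hν
  have hδ0 : 0 < ν / m := div_pos hν0 (by linarith)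
  have hδ : ν / m ≤ π / 2 := by
    rw [div_le_iff₀ (by linarith)]
    nlinarith [pi_pos]
  have hexp : 1 / 2 ≤ Real.exp (-θ.re) := by
    linarith [Real.add_one_le_exp (-θ.re), (abs_le.1 hθre).2]
  refine ⟨fun z s hs => ?_, fun z hz s hs => ?_⟩ <;> rw [exp_neg_mul_ofReal_of_im_eq hθim]
  · exact infDist_le_infDist_sub_of_add_mem
      (fun p hp => add_mem_cone hδ0 hδ hp (by positivity)) z
  · refine le_trans ?_ (mul_sin_le_infDist_sub_of_notMem_cone hδ0 hδ hz _)
    gcongr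
    exact Real.sin_nonneg_of_nonneg_of_le_pi hδ0.le (by linarith [pi_pos])
end
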